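/- For all integers m ≥ 0 and k ≥ 1, the Bernoulli number of order k satisfies B_m^{(k)} = Σ_{n=0}^m (−1)^{m−n} D̂_n^(k) S_2(m,n), where D̂_n^(k) are the Daehee numbers of the second kind of order k and S_2 denotes the Stirling numbers of the second kind. -/

import Mathlib

/-!
Substitute `t ↦ 1 - e^{-t}` into the generating function of the Daehee numbers of the second
kind. Then `1 - t` becomes `e^{-t}` and `-log(1 - t)` becomes `t`, so the left-hand side
`((1 - t)(-log(1 - t)))^k` turns into `(t e^{-t})^k`; multiplying by `e^{kt}` shows that
`Σ D̂_n^(k) (1 - e^{-t})^n / n!` satisfies the defining identity of the Bernoulli numbers of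
order `k`. Finally `(1 - e^{-t})^n = (-1)^n (e^{-t} - 1)^n`, whose coefficients are signed Stirling
numbers of the second kind.
-/


open PowerSeries Polynomial Finset

/-- `log(1+t) = Σ_{n≥1} (-1)^{n+1} t^n / n` as a formal power series over ℚ. -/
noncomputable def logOneAdd : PowerSeries ℚ :=
  PowerSeries.mk fun n => if n = 0 then 0 else (-1) ^ (n + 1) / (n : ℚ)

/-- `−log(1−t) = Σ_{n≥1} t^n / n` as a formal power series over ℚ. -/
noncomputable def negLogOneSub : PowerSeries ℚ :=
  PowerSeries.mk fun n => if n = 0 then 0 else 1 / (n : ℚ)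

/-- `e^t = Σ_{n≥0} t^n / n!` as a formal power series over ℚ. -/
noncomputable def expQ : PowerSeries ℚ :=
  PowerSeries.mk fun n => 1 / (n.factorial : ℚ)

/-- `log(1+t)` as a formal power series with coefficients in ℚ[x]. -/
noncomputable def logOneAddP : PowerSeries (Polynomial ℚ) :=
  PowerSeries.mk fun n => Polynomial.C (if n = 0 then 0 else (-1) ^ (n + 1) / (n : ℚ))

/-- `−log(1−t)` as a formal power series with coefficients in ℚ[x]. -/
noncomputable def negLogOneSubP : PowerSeries (Polynomial ℚ) :=
  PowerSeries.mk fun n => Polynomial.C (if n = 0 then 0 else 1 / (n : ℚ))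

/-- `e^t` as a formal power series with coefficients in ℚ[x]. -/
noncomputable def expP : PowerSeries (Polynomial ℚ) :=
  PowerSeries.mk fun n => Polynomial.C (1 / (n.factorial : ℚ))

/-- `e^{xt} = Σ_{n≥0} x^n t^n / n!` as a formal power series with coefficients in ℚ[x]. -/
noncomputable def expXT : PowerSeries (Polynomial ℚ) :=
  PowerSeries.mk fun n => Polynomial.C (1 / (n.factorial : ℚ)) * Polynomial.X ^ n

/-- The binomial polynomial `x(x−1)⋯(x−n+1)/n! ∈ ℚ[x]`. -/
noncomputable def binomPoly (n : ℕ) : Polynomial ℚ :=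
  Polynomial.C (1 / (n.factorial : ℚ)) *
    ∏ i ∈ Finset.range n, (Polynomial.X - Polynomial.C (i : ℚ))

/-- `(1+t)^x = Σ_{n≥0} C(x,n) t^n` as a formal power series with coefficients in ℚ[x]. -/
noncomputable def onePlusTX : PowerSeries (Polynomial ℚ) :=
  PowerSeries.mk binomPoly

/-- `(1−t)^x = Σ_{n≥0} (−1)^n C(x,n) t^n` as a formal power series with coefficients in ℚ[x]. -/
noncomputable def oneSubTX : PowerSeries (Polynomial ℚ) :=
  PowerSeries.mk fun n => (-1) ^ n * binomPoly n

namespace PowerSeries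

section CommRing

variable {R : Type*} [CommRing R]

theorem coeff_pow_eq_zero_of_lt {g : R⟦X⟧} (hg : constantCoeff g = 0) {m n : ℕ} (h : m < n) :
    coeff m (g ^ n) = 0 :=
  X_pow_dvd_iff.1 (pow_dvd_pow_of_dvd (X_dvd_iff.2 hg) n) m h

theorem coeff_subst_eq_sum_range {g : R⟦X⟧} (hg : constantCoeff g = 0) (f : R⟦X⟧) (m : ℕ) :
    coeff m (f.subst g) = ∑ n ∈ range (m + 1), coeff n f * coeff m (g ^ n) := by
  rw [coeff_subst' (HasSubst.of_constantCoeff_zero' hg)]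
  refine finsum_eq_sum_of_support_subset _ fun n hn => ?_
  rw [coe_range, Set.mem_Iio, Nat.lt_succ_iff]
  by_contra! hmn
  exact hn (by simp only [coeff_pow_eq_zero_of_lt hg hmn, smul_zero])

theorem subst_one {g : R⟦X⟧} (hg : HasSubst g) : (1 : R⟦X⟧).subst g = (1 : R⟦X⟧) := by
  rw [← coe_substAlgHom hg, map_one]

theorem derivative_rescale (r : R) (f : R⟦X⟧) :
    d⁄dX R (rescale r f) = C r * rescale r (d⁄dX R f) := by
  ext n
  simp only [coeff_derivative, coeff_rescale, coeff_C_mul, pow_succ]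
  ring

theorem coeff_evalNegHom (f : R⟦X⟧) (n : ℕ) : coeff n (evalNegHom f) = (-1) ^ n * coeff n f :=
  coeff_rescale f (-1) n

end CommRing

theorem expQ_eq_exp : expQ = exp ℚ := by
  ext n
  simp [expQ]

theorem exp_sub_one_ne_zero : exp ℚ - 1 ≠ 0 := fun h => by
  simpa using congrArg (coeff 1) h

theorem derivative_evalNegHom_exp : d⁄dX ℚ (evalNegHom (exp ℚ)) = -evalNegHom (exp ℚ) := by
  rw [evalNegHom, derivative_rescale, derivative_exp, map_neg, map_one, neg_one_mul]

theorem constantCoeff_one_sub_evalNegHom_exp : constantCoeff (1 - evalNegHom (exp ℚ)) = 0 := by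
  rw [map_sub, map_one, evalNegHom, ← coeff_zero_eq_constantCoeff_apply, coeff_rescale,
    coeff_zero_eq_constantCoeff_apply, constantCoeff_exp, pow_zero, one_mul, sub_self]

theorem hasSubst_one_sub_evalNegHom_exp : HasSubst (1 - evalNegHom (exp ℚ)) :=
  HasSubst.of_constantCoeff_zero' constantCoeff_one_sub_evalNegHom_exp

theorem coeff_pow_one_sub_evalNegHom_exp (m n : ℕ) :
    coeff m ((1 - evalNegHom (exp ℚ)) ^ n) = (-1) ^ (m + n) * coeff m ((exp ℚ - 1) ^ n) := by
  rw [show 1 - evalNegHom (exp ℚ) = evalNegHom (-(exp ℚ - 1)) by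
      rw [map_neg, map_sub, map_one, neg_sub],
    ← map_pow, coeff_evalNegHom, neg_pow (exp ℚ - 1),
    show (-1 : ℚ⟦X⟧) ^ n = C ((-1) ^ n) by simp, coeff_C_mul, pow_add, mul_assoc]

theorem derivative_negLogOneSub : d⁄dX ℚ negLogOneSub = mk 1 := by
  ext n
  rw [coeff_derivative, negLogOneSub, coeff_mk, coeff_mk, if_neg n.succ_ne_zero]
  push_cast
  field_simp
  rfl

/- Both sides vanish at `0` and have derivative `1`: by the chain rule the left one has derivative
`g' / (1 - g)` with `g = 1 - e^{-t}`, and `g' = e^{-t} = 1 - g`. -/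
theorem negLogOneSub_subst_one_sub_evalNegHom_exp :
    negLogOneSub.subst (1 - evalNegHom (exp ℚ)) = X := by
  have hg := hasSubst_one_sub_evalNegHom_exp
  have hgeom : (mk 1 : ℚ⟦X⟧).subst (1 - evalNegHom (exp ℚ)) * evalNegHom (exp ℚ) = 1 := by
    have h := congrArg (subst (1 - evalNegHom (exp ℚ))) (mk_one_mul_one_sub_eq_one ℚ)
    rwa [subst_mul hg, subst_sub hg, subst_X hg, subst_one hg, sub_sub_cancel] at h
  refine derivative.ext ?_ ?_
  · rw [derivative_subst hg, derivative_negLogOneSub, map_sub, derivative_one,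
      derivative_evalNegHom_exp, zero_sub, neg_neg, hgeom, derivative_X]
  · rw [constantCoeff_X]
    exact constantCoeff_subst_eq_zero constantCoeff_one_sub_evalNegHom_exp _
      (by simp [negLogOneSub])

theorem X_pow_eq_exp_sub_one_pow_mul_subst {k : ℕ} {F : ℚ⟦X⟧}
    (hF : ((1 - X) * negLogOneSub) ^ k = X ^ k * F) :
    X ^ k = (exp ℚ - 1) ^ k * F.subst (1 - evalNegHom (exp ℚ)) := by
  have hg := hasSubst_one_sub_evalNegHom_exp
  have h := congrArg (subst (1 - evalNegHom (exp ℚ))) hF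
  rw [subst_pow hg, subst_mul hg, subst_sub hg, subst_one hg, subst_X hg,
    negLogOneSub_subst_one_sub_evalNegHom_exp, sub_sub_cancel, subst_mul hg, subst_pow hg,
    subst_X hg] at h
  calc X ^ k = (exp ℚ * evalNegHom (exp ℚ) * X) ^ k := by rw [exp_mul_exp_neg_eq_one, one_mul]
    _ = exp ℚ ^ k * ((1 - evalNegHom (exp ℚ)) ^ k * F.subst (1 - evalNegHom (exp ℚ))) := by
      rw [mul_assoc, mul_pow, h]
    _ = (exp ℚ - 1) ^ k * F.subst (1 - evalNegHom (exp ℚ)) := by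
      rw [← mul_assoc, ← mul_pow, mul_sub, mul_one, exp_mul_exp_neg_eq_one]

end PowerSeries

theorem bernoulli_order_eq_signed_daehee_second_kind_stirling2_sum_general
    (k : ℕ) (m : ℕ)
    (Dh : ℕ → ℚ)
    (hDh : ((1 - PowerSeries.X) * negLogOneSub) ^ k
      = PowerSeries.X ^ k * PowerSeries.mk (fun j => Dh j / (j.factorial : ℚ)))
    (B : ℕ → ℚ)
    (hB : (PowerSeries.X : PowerSeries ℚ) ^ k
      = (expQ - 1) ^ k * PowerSeries.mk (fun j => B j / (j.factorial : ℚ)))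
    (S2 : ℕ → ℕ → ℚ)
    (hS2 : ∀ j : ℕ, (expQ - 1) ^ j
      = PowerSeries.mk (fun l =>
          if j ≤ l then (j.factorial : ℚ) * S2 l j / (l.factorial : ℚ) else 0)) :
    B m = ∑ n ∈ Finset.range (m + 1), (-1 : ℚ) ^ (m - n) * Dh n * S2 m n := by
  have hBD : PowerSeries.mk (fun j => B j / (j.factorial : ℚ))
      = (PowerSeries.mk fun j => Dh j / (j.factorial : ℚ)).subst (1 - evalNegHom (exp ℚ)) := by
    refine mul_left_cancel₀ (pow_ne_zero k exp_sub_one_ne_zero) ?_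
    rw [← expQ_eq_exp, ← hB, expQ_eq_exp, ← X_pow_eq_exp_sub_one_pow_mul_subst hDh]
  have hBm := congrArg (PowerSeries.coeff m) hBD
  rw [PowerSeries.coeff_mk, coeff_subst_eq_sum_range constantCoeff_one_sub_evalNegHom_exp,
    div_eq_iff (by positivity)] at hBm
  rw [hBm, Finset.sum_mul]
  refine Finset.sum_congr rfl fun n hn => ?_
  have hnm : n ≤ m := Nat.lt_succ_iff.1 (Finset.mem_range.1 hn)
  rw [PowerSeries.coeff_mk, coeff_pow_one_sub_evalNegHom_exp, ← expQ_eq_exp, hS2 n,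
    PowerSeries.coeff_mk, if_pos hnm]
  obtain ⟨d, rfl⟩ := Nat.exists_eq_add_of_le hnm
  rw [Nat.add_sub_cancel_left, show n + d + n = d + 2 * n by ring, pow_add, pow_mul, neg_one_sq,
    one_pow, mul_one]
  field_simp

/-- For `m ≥ 0`, `k ≥ 1`, the Bernoulli numbers of order `k` satisfy
`B_m^{(k)} = Σ_{n=0}^m (−1)^{m−n} D̂_n^(k) S_2(m,n)`, where `D̂_n^(k)` are the Daehee
numbers of the second kind of order `k` and `S_2` the Stirling numbers of the second kind. -/
theorem bernoulli_order_eq_signed_daehee_second_kind_stirling2_sum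
    (k : ℕ) (hk : 1 ≤ k) (m : ℕ)
    (Dh : ℕ → ℚ)
    (hDh : ((1 - PowerSeries.X) * negLogOneSub) ^ k
      = PowerSeries.X ^ k * PowerSeries.mk (fun j => Dh j / (j.factorial : ℚ)))
    (B : ℕ → ℚ)
    (hB : (PowerSeries.X : PowerSeries ℚ) ^ k
      = (expQ - 1) ^ k * PowerSeries.mk (fun j => B j / (j.factorial : ℚ)))
    (S2 : ℕ → ℕ → ℚ)
    (hS2 : ∀ j : ℕ, (expQ - 1) ^ j
      = PowerSeries.mk (fun l =>
          if j ≤ l then (j.factorial : ℚ) * S2 l j / (l.factorial : ℚ) else 0)) :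
    B m = ∑ n ∈ Finset.range (m + 1), (-1 : ℚ) ^ (m - n) * Dh n * S2 m n :=
  bernoulli_order_eq_signed_daehee_second_kind_stirling2_sum_general k m Dh hDh B hB S2 hS2
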